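/- arXiv:2504.13804 — 5 statements merged into one kernel-verified Lean document; each statement's English description precedes it below -/
import Mathlib

section
/- Let p and q be probability mass functions on a finite type such that q_i > 0 whenever p_i > 0. Then (C(p) − C(q))² ≤ 18 · d_KL(p, q), where d_KL(p, q) = Σ_{i : p_i > 0} p_i · log(p_i / q_i) is the Kullback–Leibler divergence. -/
/-!
Let `H = ∑ i, (√p i - √q i) ^ 2` be the squared Hellinger distance. Cauchy–Schwarz applied to
`|p i - q i| = |√p i - √q i| * (√p i + √q i)` gives `‖p - q‖₁ ^ 2 ≤ 4 H`, and `log x ≥ 1 - 1 / x`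
at `x = √(p i / q i)` gives `H ≤ d_KL(p, q)`. Since `∑ i, (p i - q i) = 0`, we have
`C(p) - C(q) = ∑ i, (p i - q i) * (p i + q i - 1)` with `|p i + q i - 1| ≤ 1`, so
`|C(p) - C(q)| ≤ ‖p - q‖₁`. Altogether `(C(p) - C(q)) ^ 2 ≤ 4 d_KL(p, q)`.
-/

open Real Finset

theorem sq_sqrt_sub_sqrt_le_mul_log_div_sub_add {p q : ℝ} (hp : 0 ≤ p) (hq : 0 ≤ q)
    (hpq : 0 < p → 0 < q) : (√p - √q) ^ 2 ≤ p * log (p / q) - p + q := by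
  rcases hp.eq_or_lt with rfl | hp
  · simp [sq_sqrt hq]
  have hq := hpq hp
  set a := √p
  set b := √q
  have ha : 0 < a := sqrt_pos.2 hp
  have hb : 0 < b := sqrt_pos.2 hq
  have hlog : log (p / q) = 2 * log (a / b) := by
    rw [log_div ha.ne' hb.ne', log_div hp.ne' hq.ne', log_sqrt hp.le, log_sqrt hq.le]; ring
  have hlog_ge : 1 - b / a ≤ log (a / b) := by
    simpa using one_sub_inv_le_log_of_pos (div_pos ha hb)
  have hp_eq : p = a ^ 2 := (sq_sqrt hp.le).symm
  have hq_eq : q = b ^ 2 := (sq_sqrt hq.le).symm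
  have key : 2 * (p - a * b) ≤ p * log (p / q) :=
    calc 2 * (p - a * b) = 2 * p * (1 - b / a) := by rw [hp_eq]; field_simp
      _ ≤ 2 * p * log (a / b) := mul_le_mul_of_nonneg_left hlog_ge (by positivity)
      _ = p * log (p / q) := by rw [hlog]; ring
  calc (a - b) ^ 2 = p - 2 * a * b + q := by rw [hp_eq, hq_eq]; ring
    _ ≤ p * log (p / q) - p + q := by linarith

theorem abs_sub_eq_abs_sqrt_sub_sqrt_mul {x y : ℝ} (hx : 0 ≤ x) (hy : 0 ≤ y) :
    |x - y| = |√x - √y| * (√x + √y) := by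
  rw [← abs_of_nonneg (add_nonneg (sqrt_nonneg x) (sqrt_nonneg y)), ← abs_mul]
  congr 1
  linear_combination -(sq_sqrt hx) + sq_sqrt hy

section
variable {ι : Type*} (s : Finset ι) {p q : ι → ℝ}

theorem sq_sum_abs_sub_le_mul_sum_sq_sqrt_sub_sqrt (hp : ∀ i ∈ s, 0 ≤ p i)
    (hq : ∀ i ∈ s, 0 ≤ q i) :
    (∑ i ∈ s, |p i - q i|) ^ 2
      ≤ 2 * (∑ i ∈ s, p i + ∑ i ∈ s, q i) * ∑ i ∈ s, (√(p i) - √(q i)) ^ 2 := by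
  have hsum : ∑ i ∈ s, |p i - q i| = ∑ i ∈ s, |√(p i) - √(q i)| * (√(p i) + √(q i)) :=
    sum_congr rfl fun i hi => abs_sub_eq_abs_sqrt_sub_sqrt_mul (hp i hi) (hq i hi)
  have hsq : ∑ i ∈ s, (√(p i) + √(q i)) ^ 2 ≤ 2 * (∑ i ∈ s, p i + ∑ i ∈ s, q i) := by
    rw [← sum_add_distrib, mul_sum]
    refine sum_le_sum fun i hi => ?_
    exact add_sq_le.trans_eq (by rw [sq_sqrt (hp i hi), sq_sqrt (hq i hi)])
  calc (∑ i ∈ s, |p i - q i|) ^ 2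
      ≤ (∑ i ∈ s, |√(p i) - √(q i)| ^ 2) * ∑ i ∈ s, (√(p i) + √(q i)) ^ 2 := by
        rw [hsum]; exact sum_mul_sq_le_sq_mul_sq _ _ _
    _ ≤ _ := by
        simp only [sq_abs]
        rw [mul_comm]
        exact mul_le_mul_of_nonneg_right hsq (sum_nonneg fun i _ => sq_nonneg _)

theorem sum_sq_sqrt_sub_sqrt_le_sum_mul_log_div (hp : ∀ i ∈ s, 0 ≤ p i) (hq : ∀ i ∈ s, 0 ≤ q i)
    (hpq : ∀ i ∈ s, 0 < p i → 0 < q i) (hsum : ∑ i ∈ s, p i = ∑ i ∈ s, q i) :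
    ∑ i ∈ s, (√(p i) - √(q i)) ^ 2 ≤ ∑ i ∈ s with 0 < p i, p i * log (p i / q i) := by
  calc ∑ i ∈ s, (√(p i) - √(q i)) ^ 2 ≤ ∑ i ∈ s, (p i * log (p i / q i) - p i + q i) :=
        sum_le_sum fun i hi =>
          sq_sqrt_sub_sqrt_le_mul_log_div_sub_add (hp i hi) (hq i hi) (hpq i hi)
    _ = ∑ i ∈ s, p i * log (p i / q i) := by
        rw [sum_add_distrib, sum_sub_distrib, hsum, sub_add_cancel]
    _ = _ := by
        refine (sum_filter_of_ne fun i hi hne => ?_).symm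
        exact (hp i hi).lt_of_ne fun h => hne (by rw [← h, zero_mul])

theorem abs_sum_sq_sub_sum_sq_le_sum_abs_sub (hp : ∀ i ∈ s, 0 ≤ p i) (hq : ∀ i ∈ s, 0 ≤ q i)
    (hp1 : ∑ i ∈ s, p i = 1) (hq1 : ∑ i ∈ s, q i = 1) :
    |∑ i ∈ s, p i ^ 2 - ∑ i ∈ s, q i ^ 2| ≤ ∑ i ∈ s, |p i - q i| := by
  have hrw : ∑ i ∈ s, p i ^ 2 - ∑ i ∈ s, q i ^ 2 = ∑ i ∈ s, (p i - q i) * (p i + q i - 1) := by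
    have h (i : ι) : (p i - q i) * (p i + q i - 1) = p i ^ 2 - q i ^ 2 - (p i - q i) := by ring
    simp only [h, sum_sub_distrib, hp1, hq1, sub_self, sub_zero]
  rw [hrw]
  refine (abs_sum_le_sum_abs _ _).trans (sum_le_sum fun i hi => ?_)
  have hp_le : p i ≤ 1 := hp1 ▸ single_le_sum hp hi
  have hq_le : q i ≤ 1 := hq1 ▸ single_le_sum hq hi
  rw [abs_mul]
  refine mul_le_of_le_one_right (abs_nonneg _) (abs_le.2 ⟨?_, ?_⟩) <;>
    linarith [hp i hi, hq i hi]

end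

/-- For probability mass functions `p` and `q` on a finite type with
`p` absolutely continuous w.r.t. `q` (i.e. `q i > 0` whenever `p i > 0`),
`(C(p) - C(q))² ≤ 18 · d_KL(p, q)`, where `C(p) = Σ_i (p i)^2` and
`d_KL(p, q) = Σ_{i : p i > 0} p i · log (p i / q i)`. -/
theorem collision_prob_sq_diff_le_KL {α : Type*} [Fintype α] (p q : α → ℝ)
    (hp0 : ∀ i, 0 ≤ p i) (hp1 : ∑ i, p i = 1)
    (hq0 : ∀ i, 0 ≤ q i) (hq1 : ∑ i, q i = 1)
    (hac : ∀ i, 0 < p i → 0 < q i) :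
    ((∑ i, (p i) ^ 2) - ∑ i, (q i) ^ 2) ^ 2
      ≤ 18 * ∑ i ∈ Finset.univ.filter (fun i => 0 < p i), p i * Real.log (p i / q i) := by
  have hp0' : ∀ i ∈ univ, 0 ≤ p i := fun i _ => hp0 i
  have hq0' : ∀ i ∈ univ, 0 ≤ q i := fun i _ => hq0 i
  have hcollision := abs_sum_sq_sub_sum_sq_le_sum_abs_sub univ hp0' hq0' hp1 hq1
  have hl1_le_hellinger := sq_sum_abs_sub_le_mul_sum_sq_sqrt_sub_sqrt univ hp0' hq0'
  have hhellinger := sum_sq_sqrt_sub_sqrt_le_sum_mul_log_div univ hp0' hq0'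
    (fun i _ => hac i) (hp1.trans hq1.symm)
  have hhellinger_nonneg : 0 ≤ ∑ i, (√(p i) - √(q i)) ^ 2 :=
    sum_nonneg fun i _ => sq_nonneg _
  rw [hp1, hq1] at hl1_le_hellinger
  calc ((∑ i, p i ^ 2) - ∑ i, q i ^ 2) ^ 2
      = |∑ i, p i ^ 2 - ∑ i, q i ^ 2| ^ 2 := (sq_abs _).symm
    _ ≤ (∑ i, |p i - q i|) ^ 2 := pow_le_pow_left₀ (abs_nonneg _) hcollision 2
    _ ≤ 4 * ∑ i, (√(p i) - √(q i)) ^ 2 := by linarith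
    _ ≤ 18 * _ := by linarith
end

section
/- Let (X_i)_{i ≥ 1} be an i.i.d. sequence of random variables on a probability space taking values in a finite type α, each with probability mass function p. Define g(x, y) = 1{x = y} − p(y) − p(x) + C(p), and for m ≥ 1 let Ū_m = Σ_{i=1}^m Σ_{j=1}^{i−1} g(X_i, X_j). Then (Ū_m)_{m ≥ 1} is a martingale with respect to the filtration F_m = σ(X_1, ..., X_m); in particular, E[Σ_{j=1}^{m−1} g(X_m, X_j) | F_{m−1}] = 0 for every m ≥ 2. -/
open MeasureTheory ProbabilityTheory

/-!
The kernel `g` is degenerate: `∑ a, p a * g a b = 0` for every `b`. The increment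
`Ū_{m+1} - Ū_m = ∑_{j ≤ m} g(X_{m+1}, X_j)` is a function of `X_{m+1}`, which is independent of
`F_m`, and of the `F_m`-measurable `X_1, …, X_m`; so conditioning on `F_m` averages out the first
argument against the law `p`, and degeneracy makes the result vanish.
-/

theorem integrable_comp_of_finite {Ω β : Type*} {mΩ : MeasurableSpace Ω} {μ : Measure Ω}
    [IsFiniteMeasure μ] [Finite β] [MeasurableSpace β] [MeasurableSingletonClass β]
    {V : Ω → β} (hV : Measurable V) (F : β → ℝ) : Integrable (fun ω => F (V ω)) μ :=
  Integrable.of_finite.comp_measurable hV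

theorem indep_comap_biSup_of_notMem {Ω ι β : Type*} {mΩ : MeasurableSpace Ω} {μ : Measure Ω}
    [MeasurableSpace β] {X : ι → Ω → β} (hX : ∀ i, Measurable (X i)) (hindep : iIndepFun X μ)
    {s : Set ι} {k : ι} (hk : k ∉ s) :
    Indep (MeasurableSpace.comap (X k) inferInstance)
      (⨆ i ∈ s, MeasurableSpace.comap (X i) inferInstance) μ :=
  (indep_of_indep_of_le_right (indep_biSup_compl (fun i => (hX i).comap_le) hindep s)
    (le_iSup₂ (f := fun i (_ : i ∈ sᶜ) => MeasurableSpace.comap (X i) inferInstance) k hk)).symm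

theorem measurable_of_mem_biSup_comap {Ω ι β : Type*} [MeasurableSpace β] {X : ι → Ω → β}
    {s : Set ι} {i : ι} (hi : i ∈ s) :
    Measurable[⨆ i ∈ s, MeasurableSpace.comap (X i) inferInstance] (X i) :=
  Measurable.of_comap_le
    (le_iSup₂ (f := fun i (_ : i ∈ s) => MeasurableSpace.comap (X i) inferInstance) i hi)

theorem condExp_indicator_preimage_of_indep {Ω α : Type*} {m mΩ : MeasurableSpace Ω}
    {μ : Measure Ω} [IsFiniteMeasure μ] [MeasurableSpace α] [MeasurableSingletonClass α]
    {Y : Ω → α} (hY : Measurable Y) (hm : m ≤ mΩ)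
    (hind : Indep (MeasurableSpace.comap Y inferInstance) m μ) (a : α) :
    μ[(Y ⁻¹' {a}).indicator 1 | m] =ᵐ[μ] fun _ => μ.real (Y ⁻¹' {a}) := by
  have hmeas : StronglyMeasurable[MeasurableSpace.comap Y inferInstance]
      ((Y ⁻¹' {a}).indicator (1 : Ω → ℝ)) :=
    stronglyMeasurable_const.indicator
      ((measurableSet_singleton a).preimage (Measurable.of_comap_le le_rfl))
  refine (condExp_indep_eq hY.comap_le hm hmeas hind).trans ?_
  rw [integral_indicator_one (hY (measurableSet_singleton a))]

theorem condExp_comp_indep_eq_sum {Ω α : Type*} {m mΩ : MeasurableSpace Ω} {μ : Measure Ω}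
    [IsFiniteMeasure μ] [Fintype α] [MeasurableSpace α] [MeasurableSingletonClass α]
    {Y : Ω → α} (hY : Measurable Y) (hm : m ≤ mΩ)
    (hind : Indep (MeasurableSpace.comap Y inferInstance) m μ)
    {F : α → Ω → ℝ} (hF : ∀ a, StronglyMeasurable[m] (F a)) (hFint : ∀ a, Integrable (F a) μ) :
    μ[fun ω => F (Y ω) ω | m] =ᵐ[μ] fun ω => ∑ a, μ.real (Y ⁻¹' {a}) * F a ω := by
  classical
  have hsplit : (fun ω => F (Y ω) ω) = ∑ a, F a * (Y ⁻¹' {a}).indicator 1 := by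
    ext ω
    simp [Finset.sum_apply, Set.indicator_apply]
  have hind_int : ∀ a, Integrable ((Y ⁻¹' {a}).indicator (1 : Ω → ℝ)) μ := fun a =>
    (integrable_const 1).indicator (hY (measurableSet_singleton a))
  have hprod_int : ∀ a, Integrable (F a * (Y ⁻¹' {a}).indicator 1) μ := by
    intro a
    have heq : F a * (Y ⁻¹' {a}).indicator 1 = (Y ⁻¹' {a}).indicator (F a) := by
      ext ω
      simp [Set.indicator_apply]
    exact heq ▸ (hFint a).indicator (hY (measurableSet_singleton a))
  have hterm : ∀ a, μ[F a * (Y ⁻¹' {a}).indicator 1 | m] =ᵐ[μ]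
      fun ω => μ.real (Y ⁻¹' {a}) * F a ω := by
    intro a
    filter_upwards [condExp_mul_of_stronglyMeasurable_left (hF a) (hprod_int a) (hind_int a),
      condExp_indicator_preimage_of_indep hY hm hind a] with ω h1 h2
    rw [h1, Pi.mul_apply, h2, mul_comm]
  rw [hsplit]
  refine (condExp_finsetSum (fun a _ => hprod_int a) m).trans ?_
  filter_upwards [eventuallyEq_sum fun a (_ : a ∈ Finset.univ) => hterm a] with ω h
  simpa [Finset.sum_apply] using h

theorem sum_mul_collisionKernel_eq_zero {α : Type*} [Fintype α] [DecidableEq α] {p : α → ℝ}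
    (hp1 : ∑ a, p a = 1) {g : α → α → ℝ}
    (hg : ∀ x y, g x y = (if x = y then (1 : ℝ) else 0) - p y - p x + ∑ z, (p z) ^ 2) (b : α) :
    ∑ a, p a * g a b = 0 := by
  simp only [hg, mul_add, mul_sub, mul_ite, mul_one, mul_zero, Finset.sum_add_distrib,
    Finset.sum_sub_distrib, Finset.sum_ite_eq', Finset.mem_univ, if_true, ← Finset.sum_mul, hp1,
    ← sq]
  ring

theorem condExp_sum_comp_indep_eq_zero {Ω α ι : Type*} {m mΩ : MeasurableSpace Ω}
    {μ : Measure Ω} [IsFiniteMeasure μ] [Fintype α] [MeasurableSpace α]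
    [MeasurableSingletonClass α] {Y : Ω → α} (hY : Measurable Y) (hm : m ≤ mΩ)
    (hind : Indep (MeasurableSpace.comap Y inferInstance) m μ) {g : α → α → ℝ}
    (hdeg : ∀ b, ∑ a, μ.real (Y ⁻¹' {a}) * g a b = 0) {s : Finset ι} {Z : ι → Ω → α}
    (hZ : ∀ j ∈ s, Measurable[m] (Z j)) :
    μ[fun ω => ∑ j ∈ s, g (Y ω) (Z j ω) | m] =ᵐ[μ] 0 := by
  have hF : ∀ a, StronglyMeasurable[m] fun ω => ∑ j ∈ s, g a (Z j ω) := fun a =>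
    (Finset.measurable_sum s fun j hj =>
      (measurable_of_finite (g a)).comp (hZ j hj)).stronglyMeasurable
  have hFint : ∀ a, Integrable (fun ω => ∑ j ∈ s, g a (Z j ω)) μ := fun a =>
    integrable_finsetSum s fun j hj => integrable_comp_of_finite ((hZ j hj).mono hm le_rfl) (g a)
  filter_upwards [condExp_comp_indep_eq_sum hY hm hind hF hFint] with ω h
  rw [h, Pi.zero_apply]
  simp only [Finset.mul_sum]
  rw [Finset.sum_comm]
  exact Finset.sum_eq_zero fun j _ => hdeg (Z j ω)

/-- Let `(X_i)_{i ≥ 1}` be an i.i.d. sequence with values in a finite type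
`α`, each with pmf `p`. With the degenerate kernel
`g(x, y) = 1{x = y} - p y - p x + C(p)` (where `C(p) = Σ_z (p z)^2`) and
`Ū_m = Σ_{i=1}^m Σ_{j=1}^{i-1} g(X_i, X_j)`, the process `(Ū_m)` is a martingale with
respect to the natural filtration `F_m = σ(X_1, ..., X_m)`; in particular
`E[Σ_{j=1}^{m-1} g(X_m, X_j) | F_{m-1}] = 0` a.s. for every `m ≥ 2`. -/
theorem decoupled_collision_process_martingale
    {Ω : Type*} {mΩ : MeasurableSpace Ω} (μ : Measure Ω) [IsProbabilityMeasure μ]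
    {α : Type*} [Fintype α] [DecidableEq α] [MeasurableSpace α] [MeasurableSingletonClass α]
    (p : α → ℝ) (hp0 : ∀ a, 0 ≤ p a) (hp1 : ∑ a, p a = 1)
    (X : ℕ → Ω → α) (hXmeas : ∀ i, Measurable (X i))
    (hindep : iIndepFun X μ)
    (hlaw : ∀ i a, μ {ω | X i ω = a} = ENNReal.ofReal (p a))
    (g : α → α → ℝ)
    (hg : ∀ x y, g x y = (if x = y then (1 : ℝ) else 0) - p y - p x + ∑ z, (p z) ^ 2)
    (ℱ : Filtration ℕ mΩ)
    (hℱ : ∀ m, ℱ m = ⨆ i ∈ Finset.Icc 1 m, MeasurableSpace.comap (X i) inferInstance)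
    (U : ℕ → Ω → ℝ)
    (hU : ∀ m ω, U m ω =
      ∑ i ∈ Finset.Icc 1 m, ∑ j ∈ Finset.Icc 1 (i - 1), g (X i ω) (X j ω)) :
    Martingale U ℱ μ ∧
      ∀ m, 2 ≤ m →
        μ[(fun ω => ∑ j ∈ Finset.Icc 1 (m - 1), g (X m ω) (X j ω)) | ℱ (m - 1)]
          =ᵐ[μ] 0 := by
  have hXℱ : ∀ n, ∀ i ∈ Finset.Icc 1 n, Measurable[ℱ n] (X i) := fun n i hi => by
    rw [hℱ n]
    exact measurable_of_mem_biSup_comap (X := X) (s := ↑(Finset.Icc 1 n)) hi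
  have hdeg : ∀ k b, ∑ a, μ.real (X k ⁻¹' {a}) * g a b = 0 := fun k b => by
    simpa [measureReal_def, Set.preimage, hlaw, hp0] using sum_mul_collisionKernel_eq_zero hp1 hg b
  have hincr : ∀ n k, k ∉ Finset.Icc 1 n →
      μ[fun ω => ∑ j ∈ Finset.Icc 1 n, g (X k ω) (X j ω) | ℱ n] =ᵐ[μ] 0 := fun n k hk =>
    condExp_sum_comp_indep_eq_zero (hXmeas k) (ℱ.le n)
      (hℱ n ▸ indep_comap_biSup_of_notMem hXmeas hindep (s := ↑(Finset.Icc 1 n)) hk)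
      (hdeg k) (hXℱ n)
  have hUeq : ∀ n, U n = fun ω =>
      ∑ i ∈ Finset.Icc 1 n, ∑ j ∈ Finset.Icc 1 (i - 1), g (X i ω) (X j ω) := fun n =>
    funext (hU n)
  have hadapted : StronglyAdapted ℱ U := fun n => by
    refine hUeq n ▸ (Finset.measurable_sum _ fun i hi => Finset.measurable_sum _ fun j hj =>
      ?_).stronglyMeasurable
    have hjn : j ∈ Finset.Icc 1 n := by
      simp only [Finset.mem_Icc] at hi hj ⊢
      omega
    exact (measurable_of_finite fun q : α × α => g q.1 q.2).comp
      ((hXℱ n i hi).prodMk (hXℱ n j hjn))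
  have hint : ∀ n, Integrable (U n) μ := fun n => hUeq n ▸
    integrable_finsetSum _ fun i _ => integrable_finsetSum _ fun j _ =>
      integrable_comp_of_finite ((hXmeas i).prodMk (hXmeas j)) fun q => g q.1 q.2
  refine ⟨martingale_of_condExp_sub_eq_zero_nat hadapted hint fun n => ?_, fun m hm => ?_⟩
  · have hdiff : U (n + 1) - U n = fun ω => ∑ j ∈ Finset.Icc 1 n, g (X (n + 1) ω) (X j ω) := by
      ext ω
      rw [Pi.sub_apply, hU, hU, Finset.sum_Icc_succ_top (by omega), add_sub_cancel_left,
        Nat.add_sub_cancel]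
    exact hdiff ▸ hincr n (n + 1) (by simp)
  · exact hincr (m - 1) m (by simp; omega)
end

section
/- Let q be a probability mass function on a finite type α (so Σ_x q_x = 1), let m > 0, and let (M_x)_{x ∈ α} be independent random variables with M_x distributed as Poisson(m · q_x). Then E[(Σ_x M_x²)²] ≤ m + 7m² + 6m³ · C(q) + m⁴ · C(q)², where C(q) = Σ_x q_x². -/
/-!
With `Y_x = M_x²`, independence gives `E[(Σ Y_x)²] = (Σ E Y_x)² + Σ Var Y_x`. A Poisson variable
`N` of rate `λ` has factorial moments `E[N (N - 1) ⋯ (N - k + 1)] = λᵏ`, so `E[N²] = λ + λ²`,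
`E[N⁴] = λ + 7λ² + 6λ³ + λ⁴` and `Var N² = λ + 6λ² + 4λ³`. For `λ_x = m q_x` the second moment is
therefore `(m + m² C)² + m + 6m² C + 4m³ Σ q_x³`, and `Σ q_x³ ≤ C ≤ 1` gives the bound.
-/

open MeasureTheory ProbabilityTheory Real
open scoped NNReal Nat

lemma natCast_sq_eq_descFactorial (n : ℕ) :
    (n : ℝ) ^ 2 = n.descFactorial 2 + n.descFactorial 1 := by
  simp only [← descPochhammer_eval_eq_descFactorial ℝ, descPochhammer_succ_eval,
    descPochhammer_zero, Polynomial.eval_one]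
  push_cast
  ring

lemma natCast_pow_four_eq_descFactorial (n : ℕ) :
    (n : ℝ) ^ 4 = n.descFactorial 4 + 6 * n.descFactorial 3 + 7 * n.descFactorial 2
      + n.descFactorial 1 := by
  simp only [← descPochhammer_eval_eq_descFactorial ℝ, descPochhammer_succ_eval,
    descPochhammer_zero, Polynomial.eval_one]
  push_cast
  ring

namespace ProbabilityTheory

lemma hasSum_poisson_mul_descFactorial (r : ℝ≥0) (k : ℕ) :
    HasSum (fun n ↦ exp (-r) * r ^ n / n ! * (n.descFactorial k : ℝ)) (r ^ k) := by
  rw [← hasSum_nat_add_iff' k]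
  have hshift : ∀ n, exp (-r) * r ^ (n + k) / (n + k)! * ((n + k).descFactorial k : ℝ)
      = (r : ℝ) ^ k * (exp (-r) * r ^ n / n !) := by
    intro n
    have hfac : ((n + k)! : ℝ) = n ! * (n + k).descFactorial k := by
      exact_mod_cast (Nat.add_sub_cancel n k ▸
        Nat.factorial_mul_descFactorial (Nat.le_add_left k n)).symm
    have : ((n + k).descFactorial k : ℝ) ≠ 0 := by
      exact_mod_cast (Nat.descFactorial_pos.2 (Nat.le_add_left k n)).ne'
    rw [hfac, pow_add]
    field_simp
  have hhead : ∑ i ∈ Finset.range k, exp (-r) * r ^ i / i ! * (i.descFactorial k : ℝ) = 0 :=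
    Finset.sum_eq_zero fun i hi ↦ by
      rw [Nat.descFactorial_eq_zero_iff_lt.2 (Finset.mem_range.1 hi), Nat.cast_zero, mul_zero]
  simpa only [hshift, hhead, sub_zero, mul_one] using (hasSum_one_poissonMeasure r).mul_left _

lemma hasSum_poisson_mul_sq (r : ℝ≥0) :
    HasSum (fun n ↦ exp (-r) * r ^ n / n ! * (n : ℝ) ^ 2) (r + r ^ 2) := by
  convert (hasSum_poisson_mul_descFactorial r 2).add (hasSum_poisson_mul_descFactorial r 1)
    using 1
  · ext n
    rw [natCast_sq_eq_descFactorial]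
    ring
  · ring

lemma hasSum_poisson_mul_pow_four (r : ℝ≥0) :
    HasSum (fun n ↦ exp (-r) * r ^ n / n ! * (n : ℝ) ^ 4)
      (r + 7 * r ^ 2 + 6 * r ^ 3 + r ^ 4) := by
  convert (((hasSum_poisson_mul_descFactorial r 4).add
    ((hasSum_poisson_mul_descFactorial r 3).mul_left 6)).add
    ((hasSum_poisson_mul_descFactorial r 2).mul_left 7)).add
    (hasSum_poisson_mul_descFactorial r 1) using 1
  · ext n
    rw [natCast_pow_four_eq_descFactorial]
    ring
  · ring

section Poisson

variable {Ω : Type*} {mΩ : MeasurableSpace Ω} {P : Measure Ω} {X : Ω → ℕ} {r : ℝ≥0}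

lemma hasLaw_poissonMeasure_of_measure_eq (hX : Measurable X)
    (h : ∀ n, P {ω | X ω = n} = ENNReal.ofReal (exp (-r) * r ^ n / n !)) :
    HasLaw X (poissonMeasure r) P where
  aemeasurable := hX.aemeasurable
  map_eq := Measure.ext_of_singleton fun n ↦ by
    rw [Measure.map_apply hX (measurableSet_singleton n), poissonMeasure_singleton]
    exact h n

namespace HasLaw

lemma integral_comp_poissonMeasure_of_hasSum (hX : HasLaw X (poissonMeasure r) P)
    {f : ℕ → ℝ} {a : ℝ} (hf : HasSum (fun n ↦ exp (-r) * r ^ n / n ! * f n) a) :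
    ∫ ω, f (X ω) ∂P = a := by
  rw [← Function.comp_def, hX.integral_comp .of_discrete, integral_poissonMeasure]
  exact hf.tsum_eq

lemma integrable_comp_poissonMeasure_of_hasSum (hX : HasLaw X (poissonMeasure r) P)
    {f : ℕ → ℝ} {a : ℝ} (hf0 : ∀ n, 0 ≤ f n)
    (hf : HasSum (fun n ↦ exp (-r) * r ^ n / n ! * f n) a) :
    Integrable (fun ω ↦ f (X ω)) P := by
  rw [← Function.comp_def, ← integrable_map_measure .of_discrete hX.aemeasurable, hX.map_eq,
    integrable_poissonMeasure_iff]
  simpa only [Real.norm_of_nonneg (hf0 _)] using hf.summable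

lemma memLp_natCast_sq_poissonMeasure (hX : HasLaw X (poissonMeasure r) P) :
    MemLp (fun ω ↦ (X ω : ℝ) ^ 2) 2 P := by
  have hmeas : AEStronglyMeasurable (fun ω ↦ (X ω : ℝ) ^ 2) P :=
    ((Measurable.of_discrete (f := fun n : ℕ ↦ (n : ℝ) ^ 2)).comp_aemeasurable
      hX.aemeasurable).aestronglyMeasurable
  refine (memLp_two_iff_integrable_sq hmeas).2 ?_
  simp only [← pow_mul]
  exact hX.integrable_comp_poissonMeasure_of_hasSum (fun n ↦ by positivity)
    (hasSum_poisson_mul_pow_four r)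

lemma integral_natCast_sq_poissonMeasure (hX : HasLaw X (poissonMeasure r) P) :
    ∫ ω, (X ω : ℝ) ^ 2 ∂P = r + r ^ 2 :=
  hX.integral_comp_poissonMeasure_of_hasSum (hasSum_poisson_mul_sq r)

lemma variance_natCast_sq_poissonMeasure [IsProbabilityMeasure P]
    (hX : HasLaw X (poissonMeasure r) P) :
    Var[fun ω ↦ (X ω : ℝ) ^ 2; P] = r + 6 * r ^ 2 + 4 * r ^ 3 := by
  rw [variance_eq_sub hX.memLp_natCast_sq_poissonMeasure, hX.integral_natCast_sq_poissonMeasure]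
  simp only [Pi.pow_apply, ← pow_mul]
  rw [hX.integral_comp_poissonMeasure_of_hasSum (hasSum_poisson_mul_pow_four r)]
  ring

end HasLaw

end Poisson

lemma integral_sum_sq_of_pairwise_indepFun {Ω ι : Type*} {mΩ : MeasurableSpace Ω}
    {P : Measure Ω} [IsProbabilityMeasure P] [Fintype ι] {Y : ι → Ω → ℝ}
    (hY : ∀ i, MemLp (Y i) 2 P) (hindep : Pairwise fun i j ↦ Y i ⟂ᵢ[P] Y j) :
    ∫ ω, (∑ i, Y i ω) ^ 2 ∂P = (∑ i, ∫ ω, Y i ω ∂P) ^ 2 + ∑ i, Var[Y i; P] := by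
  have hvar := IndepFun.variance_sum (s := Finset.univ) (fun i _ ↦ hY i)
    (fun i _ j _ hij ↦ hindep hij)
  rw [variance_eq_sub (memLp_finsetSum' _ fun i _ ↦ hY i)] at hvar
  simp only [Pi.pow_apply, Finset.sum_apply] at hvar
  rw [integral_finsetSum _ fun i _ ↦ (hY i).integrable one_le_two] at hvar
  linarith

end ProbabilityTheory

lemma sum_poisson_sq_moments_le {α : Type*} [Fintype α] {q : α → ℝ} (hq0 : ∀ x, 0 ≤ q x)
    (hq1 : ∑ x, q x = 1) {m : ℝ} (hm : 0 ≤ m) :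
    (∑ x, (m * q x + (m * q x) ^ 2)) ^ 2
        + ∑ x, (m * q x + 6 * (m * q x) ^ 2 + 4 * (m * q x) ^ 3)
      ≤ m + 7 * m ^ 2 + 6 * m ^ 3 * (∑ x, q x ^ 2) + m ^ 4 * (∑ x, q x ^ 2) ^ 2 := by
  have hq_le_one (x : α) : q x ≤ 1 :=
    hq1 ▸ Finset.single_le_sum (fun y _ ↦ hq0 y) (Finset.mem_univ x)
  have hC : ∑ x, q x ^ 2 ≤ 1 := hq1 ▸ Finset.sum_le_sum fun x _ ↦
    pow_le_of_le_one (hq0 x) (hq_le_one x) two_ne_zero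
  have hDC : ∑ x, q x ^ 3 ≤ ∑ x, q x ^ 2 := Finset.sum_le_sum fun x _ ↦
    pow_le_pow_of_le_one (hq0 x) (hq_le_one x) (by norm_num)
  have hD : 0 ≤ ∑ x, q x ^ 3 := Finset.sum_nonneg fun x _ ↦ pow_nonneg (hq0 x) 3
  simp only [mul_pow, Finset.sum_add_distrib, ← Finset.mul_sum, hq1]
  nlinarith [pow_nonneg hm 2, pow_nonneg hm 3]

/-- Let `q` be a pmf on a finite type `α`, `m > 0`, and let
`(M_x)_{x ∈ α}` be independent with `M_x ~ Poisson(m · q_x)`. Then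
`E[(Σ_x M_x²)²] ≤ m + 7m² + 6m³ · C(q) + m⁴ · C(q)²` where `C(q) = Σ_x q_x²`. -/
theorem poissonized_sum_sq_second_moment_bound
    {Ω : Type*} {mΩ : MeasurableSpace Ω} (μ : Measure Ω) [IsProbabilityMeasure μ]
    {α : Type*} [Fintype α]
    (q : α → ℝ) (hq0 : ∀ x, 0 ≤ q x) (hq1 : ∑ x, q x = 1)
    (m : ℝ) (hm : 0 < m)
    (M : α → Ω → ℕ) (hMmeas : ∀ x, Measurable (M x))
    (hindep : iIndepFun M μ)
    (hlaw : ∀ x (n : ℕ), μ {ω | M x ω = n}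
      = ENNReal.ofReal (Real.exp (-(m * q x)) * (m * q x) ^ n / n.factorial)) :
    ∫ ω, (∑ x, ((M x ω : ℝ)) ^ 2) ^ 2 ∂μ
      ≤ m + 7 * m ^ 2 + 6 * m ^ 3 * (∑ x, (q x) ^ 2)
        + m ^ 4 * (∑ x, (q x) ^ 2) ^ 2 := by
  let r (x : α) : ℝ≥0 := ⟨m * q x, mul_nonneg hm.le (hq0 x)⟩
  have hM (x : α) : HasLaw (M x) (poissonMeasure (r x)) μ :=
    hasLaw_poissonMeasure_of_measure_eq (hMmeas x) (hlaw x)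
  have hsq : Measurable fun n : ℕ ↦ (n : ℝ) ^ 2 := .of_discrete
  rw [integral_sum_sq_of_pairwise_indepFun (fun x ↦ (hM x).memLp_natCast_sq_poissonMeasure)
    fun x y hxy ↦ (hindep.indepFun hxy).comp hsq hsq]
  simp only [fun x ↦ (hM x).integral_natCast_sq_poissonMeasure,
    fun x ↦ (hM x).variance_natCast_sq_poissonMeasure]
  exact sum_poisson_sq_moments_le hq0 hq1 hm.le
end

section
/- Let p be a probability mass function on a finite type α, let r be a positive integer, and let m > 0. Index pairs (s, x) ∈ {1,...,r} × α and set q_{s,x} = p_x / r. Let (M_{s,x}) be independent random variables with M_{s,x} distributed as Poisson(m · q_{s,x}), and let (h_{s,x}) be independent random variables uniform on {−1, +1}, independent of (M_{s,x}). Let V = Σ_{s,x} h_{s,x} · M_{s,x}. Then E[V²] = m + (m²/r) · C(p), and therefore E[ r(V² − m)/m² ] = C(p). -/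
/-!
Write `V = ∑ i, h i * M i`. The summands have mean zero (`E[h i] = 0` and `h i` is independent
of `M i`) and are pairwise independent, so `E[V²] = Var V = ∑ i, Var (h i * M i) = ∑ i, E[(M i)²]`,
using `h i ^ 2 = 1`. A Poisson variable `N` of rate `λ` has `E[N²] = λ + λ²` by the Stein identity
`E[N f(N)] = λ E[f(N + 1)]`, and summing `λ + λ²` over the rates `m p x / r` gives
`m + (m² / r) C(p)`. The second identity follows by linearity.
-/

open MeasureTheory ProbabilityTheory Real

open scoped NNReal Nat

namespace ProbabilityTheory

lemma poisson_weight_succ_mul (r : ℝ) (n : ℕ) :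
    exp (-r) * r ^ (n + 1) / (n + 1)! * (n + 1 : ℕ) = r * (exp (-r) * r ^ n / n !) := by
  rw [Nat.factorial_succ]
  push_cast
  field_simp
  ring

/-- Poisson's Stein identity `E[N f(N)] = r E[f(N + 1)]`, at the level of the weighted sums. -/
lemma HasSum.poisson_weight_mul_nat_mul {r : ℝ} {f : ℕ → ℝ} {a : ℝ}
    (hf : HasSum (fun n : ℕ ↦ exp (-r) * r ^ n / n ! * f (n + 1)) a) :
    HasSum (fun n : ℕ ↦ exp (-r) * r ^ n / n ! * (n * f n)) (r * a) := by
  rw [← hasSum_nat_add_iff' 1]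
  simp only [Finset.sum_range_one, CharP.cast_eq_zero, zero_mul, mul_zero, sub_zero]
  refine (hf.mul_left r).congr_fun fun n ↦ ?_
  rw [← mul_assoc, poisson_weight_succ_mul, mul_assoc]

lemma hasSum_poisson_weight_mul_sq (r : ℝ≥0) :
    HasSum (fun n : ℕ ↦ exp (-r) * r ^ n / n ! * (n : ℝ) ^ 2) (r + r ^ 2) := by
  have h0 : HasSum (fun n : ℕ ↦ exp (-r) * r ^ n / n ! * 1) 1 := by
    simpa only [mul_one] using hasSum_one_poissonMeasure r
  have h1 : HasSum (fun n : ℕ ↦ exp (-r) * r ^ n / n ! * ((n + 1 : ℕ) : ℝ)) (r + 1) := by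
    have h := (h0.poisson_weight_mul_nat_mul (f := fun _ ↦ 1)).add h0
    rw [mul_one] at h
    refine h.congr_fun fun n ↦ ?_
    push_cast
    ring
  rw [show (r + r ^ 2 : ℝ) = r * (r + 1) by ring]
  refine (h1.poisson_weight_mul_nat_mul (f := fun n ↦ (n : ℝ))).congr_fun fun n ↦ ?_
  ring

lemma integrable_sq_poissonMeasure (r : ℝ≥0) : Integrable (fun n : ℕ ↦ (n : ℝ) ^ 2) Po(r) := by
  rw [integrable_poissonMeasure_iff]
  simpa [abs_of_nonneg] using (hasSum_poisson_weight_mul_sq r).summable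

lemma integral_sq_poissonMeasure (r : ℝ≥0) : ∫ n, (n : ℝ) ^ 2 ∂Po(r) = r + r ^ 2 := by
  rw [integral_poissonMeasure]
  exact (hasSum_poisson_weight_mul_sq r).tsum_eq

variable {Ω : Type*} {mΩ : MeasurableSpace Ω} {μ : Measure Ω}

lemma hasLaw_poissonMeasure_of_measure_eq_s13 {N : Ω → ℕ} (hN : Measurable N) (r : ℝ≥0)
    (hlaw : ∀ n : ℕ, μ {ω | N ω = n} = ENNReal.ofReal (exp (-r) * r ^ n / n !)) :
    HasLaw N Po(r) μ where
  aemeasurable := hN.aemeasurable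
  map_eq := Measure.ext_of_singleton fun n ↦ by
    rw [Measure.map_apply hN (measurableSet_singleton n), poissonMeasure_singleton]
    exact hlaw n

lemma HasLaw.memLp_two_of_poissonMeasure {N : Ω → ℕ} {r : ℝ≥0} (hN : HasLaw N Po(r) μ) :
    MemLp (fun ω ↦ (N ω : ℝ)) 2 μ := by
  have hmeas : AEStronglyMeasurable (fun ω ↦ (N ω : ℝ)) μ :=
    (measurable_from_nat.comp_aemeasurable hN.aemeasurable).aestronglyMeasurable
  rw [memLp_two_iff_integrable_sq hmeas]
  have := integrable_sq_poissonMeasure r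
  rwa [← hN.map_eq, integrable_map_measure .of_discrete hN.aemeasurable] at this

lemma HasLaw.integral_sq_of_poissonMeasure {N : Ω → ℕ} {r : ℝ≥0} (hN : HasLaw N Po(r) μ) :
    ∫ ω, (N ω : ℝ) ^ 2 ∂μ = r + r ^ 2 := by
  rw [← integral_sq_poissonMeasure r, ← hN.integral_comp .of_discrete]
  rfl

lemma integral_eq_zero_of_sign_of_measure_eq_half [IsProbabilityMeasure μ] {ε : Ω → ℝ}
    (hε : Measurable ε) (hval : ∀ ω, ε ω = 1 ∨ ε ω = -1) (hhalf : μ {ω | ε ω = 1} = 1 / 2) :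
    μ[ε] = 0 := by
  have hint : Integrable ε μ := .of_bound hε.aestronglyMeasurable 1 <|
    ae_of_all _ fun ω ↦ by rcases hval ω with h | h <;> simp [h]
  have hbern : ∫ ω, (ε ω + 1) / 2 ∂μ = μ.real {ω | (ε ω + 1) / 2 = 1} :=
    integral_of_ae_eq_zero_or_one (by fun_prop)
      (ae_of_all _ fun ω ↦ by rcases hval ω with h | h <;> norm_num [h])
  have hset : {ω | (ε ω + 1) / 2 = 1} = {ω | ε ω = 1} := by
    ext ω
    simp only [Set.mem_ofPred_eq]
    constructor <;> intro h <;> linarith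
  calc μ[ε] = 2 * ∫ ω, (ε ω + 1) / 2 ∂μ - 1 := by
        rw [integral_div, integral_add hint (integrable_const 1), integral_const, probReal_univ,
          one_smul]
        ring
    _ = 0 := by
        rw [hbern, hset, measureReal_def, hhalf]
        norm_num

lemma integral_sq_sum_of_pairwise_indepFun [IsProbabilityMeasure μ] {ι : Type*}
    {X : ι → Ω → ℝ} {s : Finset ι} (hX : ∀ i ∈ s, MemLp (X i) 2 μ) (hmean : ∀ i ∈ s, μ[X i] = 0)
    (hind : Set.Pairwise ↑s fun i j ↦ X i ⟂ᵢ[μ] X j) :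
    ∫ ω, (∑ i ∈ s, X i ω) ^ 2 ∂μ = ∑ i ∈ s, ∫ ω, X i ω ^ 2 ∂μ := by
  have hsum_mean : μ[∑ i ∈ s, X i] = 0 := by
    simp only [Finset.sum_apply]
    rw [integral_finsetSum s fun i hi ↦ (hX i hi).integrable one_le_two]
    exact Finset.sum_eq_zero hmean
  have hsum_meas : AEMeasurable (∑ i ∈ s, X i) μ :=
    Finset.aemeasurable_sum s fun i hi ↦ (hX i hi).aemeasurable
  calc ∫ ω, (∑ i ∈ s, X i ω) ^ 2 ∂μ = Var[∑ i ∈ s, X i; μ] := by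
        rw [variance_of_integral_eq_zero hsum_meas hsum_mean]
        simp only [Finset.sum_apply]
    _ = ∑ i ∈ s, Var[X i; μ] := IndepFun.variance_sum hX hind
    _ = ∑ i ∈ s, ∫ ω, X i ω ^ 2 ∂μ := Finset.sum_congr rfl fun i hi ↦
        variance_of_integral_eq_zero (hX i hi).aemeasurable (hmean i hi)

theorem integral_sq_sum_sign_mul [IsProbabilityMeasure μ] {ι : Type*} [Fintype ι]
    {ε Y : ι → Ω → ℝ} (hε : ∀ i, Measurable (ε i)) (hY : ∀ i, Measurable (Y i))
    (hε_sq : ∀ i ω, ε i ω ^ 2 = 1) (hε_mean : ∀ i, μ[ε i] = 0) (hY_memLp : ∀ i, MemLp (Y i) 2 μ)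
    (hind : iIndepFun (Sum.elim Y ε) μ) :
    ∫ ω, (∑ i, ε i ω * Y i ω) ^ 2 ∂μ = ∑ i, ∫ ω, Y i ω ^ 2 ∂μ := by
  have hsq : ∀ i ω, (ε i ω * Y i ω) ^ 2 = Y i ω ^ 2 := fun i ω ↦ by rw [mul_pow, hε_sq, one_mul]
  have hmeas : ∀ k, Measurable (Sum.elim Y ε k) := by
    rintro (i | i)
    exacts [hY i, hε i]
  have hprod_meas : ∀ i, Measurable (fun ω ↦ ε i ω * Y i ω) := fun i ↦ (hε i).mul (hY i)
  have hmemLp : ∀ i ∈ Finset.univ, MemLp (fun ω ↦ ε i ω * Y i ω) 2 μ := fun i _ ↦ by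
    rw [memLp_two_iff_integrable_sq (hprod_meas i).aestronglyMeasurable]
    simpa only [hsq] using (hY_memLp i).integrable_sq
  have hmean : ∀ i ∈ Finset.univ, ∫ ω, ε i ω * Y i ω ∂μ = 0 := fun i _ ↦ by
    have hεY : ε i ⟂ᵢ[μ] Y i := hind.indepFun Sum.inr_ne_inl
    rw [hεY.integral_fun_mul_eq_mul_integral (hε i).aestronglyMeasurable
      (hY i).aestronglyMeasurable, hε_mean, zero_mul]
  have hpair : Set.Pairwise ↑(Finset.univ : Finset ι)
      fun i j ↦ (fun ω ↦ ε i ω * Y i ω) ⟂ᵢ[μ] (fun ω ↦ ε j ω * Y j ω) := fun i _ j _ hij ↦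
    (hind.indepFun_prodMk_prodMk hmeas (.inr i) (.inl i) (.inr j) (.inl j)
      (by simp [hij]) (by simp) (by simp) (by simp [hij])).comp measurable_mul measurable_mul
  rw [integral_sq_sum_of_pairwise_indepFun hmemLp hmean hpair]
  simp only [hsq]

end ProbabilityTheory

lemma sum_fin_prod_rate_add_sq {α : Type*} [Fintype α] (p : α → ℝ) (hp1 : ∑ x, p x = 1)
    {r : ℕ} (hr : 0 < r) (m : ℝ) :
    ∑ i : Fin r × α, (m * (p i.2 / r) + (m * (p i.2 / r)) ^ 2) = m + m ^ 2 / r * ∑ x, p x ^ 2 := by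
  have hr' : (r : ℝ) ≠ 0 := by positivity
  simp only [Fintype.sum_prod_type, Finset.sum_const, Finset.card_univ, Fintype.card_fin,
    nsmul_eq_mul, Finset.sum_add_distrib, mul_pow, div_pow, ← Finset.mul_sum, ← Finset.sum_div, hp1]
  field_simp

/-- Let `p` be a pmf on a finite type `α`, `r` a positive integer and
`m > 0`. Index pairs `(s, x) ∈ {1,...,r} × α` (modeled as `Fin r × α`) and set
`q_{s,x} = p_x / r`. Let `(M_{s,x})` be independent with `M_{s,x} ~ Poisson(m · q_{s,x})`
and `(h_{s,x})` independent uniform on `{-1, +1}`, all mutually independent. Then for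
`V = Σ_{s,x} h_{s,x} · M_{s,x}` we have `E[V²] = m + (m²/r) · C(p)` and hence
`E[r (V² - m) / m²] = C(p)`, where `C(p) = Σ_x p_x²`. -/
theorem hashed_poissonized_sketch_unbiased
    {Ω : Type*} {mΩ : MeasurableSpace Ω} (μ : Measure Ω) [IsProbabilityMeasure μ]
    {α : Type*} [Fintype α]
    (p : α → ℝ) (hp0 : ∀ x, 0 ≤ p x) (hp1 : ∑ x, p x = 1)
    (r : ℕ) (hr : 0 < r) (m : ℝ) (hm : 0 < m)
    (M : Fin r × α → Ω → ℕ) (h : Fin r × α → Ω → ℝ)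
    (hMmeas : ∀ i, Measurable (M i)) (hhmeas : ∀ i, Measurable (h i))
    (hval : ∀ i ω, h i ω = 1 ∨ h i ω = -1)
    (hunif : ∀ i, μ {ω | h i ω = 1} = 1 / 2)
    (hMlaw : ∀ (i : Fin r × α) (n : ℕ), μ {ω | M i ω = n}
      = ENNReal.ofReal
          (Real.exp (-(m * (p i.2 / r))) * (m * (p i.2 / r)) ^ n / n.factorial))
    (hindep : iIndepFun
      (Sum.elim (fun i ω => ((M i ω : ℝ))) h) μ) :
    (∫ ω, (∑ i, h i ω * (M i ω : ℝ)) ^ 2 ∂μ = m + (m ^ 2 / r) * ∑ x, (p x) ^ 2) ∧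
      (∫ ω, (r : ℝ) * ((∑ i, h i ω * (M i ω : ℝ)) ^ 2 - m) / m ^ 2 ∂μ
        = ∑ x, (p x) ^ 2) := by
  let rate : Fin r × α → ℝ≥0 := fun i ↦ ⟨m * (p i.2 / r), by have := hp0 i.2; positivity⟩
  have hlaw : ∀ i, HasLaw (M i) Po(rate i) μ := fun i ↦
    hasLaw_poissonMeasure_of_measure_eq_s13 (hMmeas i) (rate i) (hMlaw i)
  have hsecond : ∫ ω, (∑ i, h i ω * (M i ω : ℝ)) ^ 2 ∂μ = m + (m ^ 2 / r) * ∑ x, (p x) ^ 2 := by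
    rw [integral_sq_sum_sign_mul (Y := fun i ω ↦ (M i ω : ℝ)) hhmeas
      (fun i ↦ measurable_from_nat.comp (hMmeas i))
      (fun i ω ↦ by rcases hval i ω with hv | hv <;> simp [hv])
      (fun i ↦ integral_eq_zero_of_sign_of_measure_eq_half (hhmeas i) (hval i) (hunif i))
      (fun i ↦ (hlaw i).memLp_two_of_poissonMeasure) hindep]
    simp only [fun i ↦ (hlaw i).integral_sq_of_poissonMeasure]
    exact sum_fin_prod_rate_add_sq p hp1 hr m
  have hint : Integrable (fun ω ↦ (∑ i, h i ω * (M i ω : ℝ)) ^ 2) μ :=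
    .of_integral_ne_zero (by rw [hsecond]; positivity)
  refine ⟨hsecond, ?_⟩
  rw [integral_div, integral_const_mul, integral_sub hint (integrable_const m), hsecond,
    integral_const, probReal_univ, one_smul]
  field_simp
  ring
end

section
/- Let p be a probability mass function on a finite type α and r a positive integer. Let X and X' be independent random variables each with law p, let s and s' be independent random variables each uniform on {1, ..., r}, and let (h_{t,x})_{(t,x) ∈ {1,...,r} × α} be a family of independent random variables each uniform on {−1, +1}, with (X, X', s, s') and (h_{t,x}) all mutually independent. Then Pr[ h_{s,X} = h_{s',X'} ] = 1/2 + C(p)/(2r); equivalently, C(p) = 2r · ( Pr[ h_{s,X} = h_{s',X'} ] − 1/2 ). -/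
/-!
For a uniformly random `h : γ → Bool` and `a ≠ b`, flipping `h` at `a` is a bijection between the
functions with `h a = h b` and those with `h a ≠ h b`, so `Pr[h a = h b] = 1/2 + [a = b]/2`.
Averaging over the two independent draws of `(s, X)` gives `1/2 + Pr[(s, X) = (s', X')]/2`, and
the salts and the samples collide independently, with probabilities `1/r` and `C(p)`.
-/

open Finset
open scoped ENNReal

universe u

lemma injective_ite_one_neg_one {R : Type*} [Ring R] [NeZero (2 : R)] :
    Function.Injective fun b : Bool => if b then (1 : R) else -1 := by
  have hne : (1 : R) ≠ -1 := fun h => two_ne_zero <| calc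
    (2 : R) = 1 + 1 := one_add_one_eq_two.symm
    _ = 1 + -1 := congrArg (1 + ·) h
    _ = 0 := add_neg_cancel 1
  intro u v
  cases u <;> cases v <;> simp [hne, hne.symm]

lemma card_filter_apply_eq_apply_mul_two {γ : Type*} [Fintype γ] [DecidableEq γ] {a b : γ}
    (hab : a ≠ b) : #{h : γ → Bool | h a = h b} * 2 = Fintype.card (γ → Bool) := by
  have hflip : #{h : γ → Bool | h a = h b} = #{h : γ → Bool | ¬h a = h b} :=
    card_equiv (Equiv.piCongrRight fun c => if c = a then Equiv.boolNot else Equiv.refl Bool)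
      fun h => by simp [Equiv.piCongrRight, hab.symm, Equiv.boolNot]
  rw [mul_two]
  nth_rewrite 2 [hflip]
  exact card_filter_add_card_filter_not _

namespace PMF

lemma monad_pure_eq_pure {α : Type u} (a : α) : (Pure.pure a : PMF α) = PMF.pure a := rfl

lemma monad_bind_eq_bind {α β : Type u} (p : PMF α) (f : α → PMF β) : p >>= f = p.bind f := rfl

lemma toOuterMeasure_bind_pure_setOf_fst_eq_snd {β δ : Type*} (q : PMF β) (u v : β → δ) :
    (q.bind fun h => pure (u h, v h)).toOuterMeasure {z | z.1 = z.2}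
      = q.toOuterMeasure {h | u h = v h} :=
  toOuterMeasure_map_apply _ q _

lemma toOuterMeasure_uniformOfFintype_setOf_apply_eq_apply {γ : Type*} [Fintype γ]
    [DecidableEq γ] (a b : γ) :
    (uniformOfFintype (γ → Bool)).toOuterMeasure {h | h a = h b}
      = 2⁻¹ + if a = b then 2⁻¹ else 0 := by
  rcases eq_or_ne a b with rfl | hab
  · rw [if_pos rfl, ENNReal.inv_two_add_inv_two]
    exact toOuterMeasure_apply_eq_one_iff _ _ |>.2 fun _ _ => rfl
  · have hne : #{h : γ → Bool | h a = h b} ≠ 0 := card_ne_zero.2 ⟨fun _ => true, by simp⟩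
    rw [toOuterMeasure_uniformOfFintype_apply, if_neg hab, add_zero, Fintype.card_subtype,
      ← card_filter_apply_eq_apply_mul_two hab, eq_comm,
      ENNReal.eq_div_iff (by simp [hne]) (ENNReal.natCast_ne_top _), Nat.cast_mul, Nat.cast_ofNat,
      mul_assoc, ENNReal.mul_inv_cancel two_ne_zero ENNReal.ofNat_ne_top, mul_one]
    rfl

variable {α : Type*} [Fintype α]

lemma sum_coe_eq_one (p : PMF α) : ∑ x, p x = 1 := by
  rw [← tsum_fintype (L := .unconditional _)]
  exact p.tsum_coe

lemma sum_mul_const (p : PMF α) (c : ℝ≥0∞) : ∑ x, p x * c = c := by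
  rw [← sum_mul, p.sum_coe_eq_one, one_mul]

lemma sum_mul_sum_mul_add_ite [DecidableEq α] (p : PMF α) (c d : ℝ≥0∞) :
    ∑ x, p x * ∑ y, p y * (c + if x = y then d else 0) = c + (∑ x, p x ^ 2) * d := by
  simp only [mul_add, sum_add_distrib, p.sum_mul_const, mul_ite, mul_zero, sum_ite_eq, mem_univ,
    if_true, ← mul_assoc, ← sq, ← sum_mul]

lemma sum_uniformOfFintype_sq [Nonempty α] :
    ∑ a, uniformOfFintype α a ^ 2 = (Fintype.card α : ℝ≥0∞)⁻¹ := by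
  simp only [uniformOfFintype_apply, sum_const, card_univ, nsmul_eq_mul, sq, ← mul_assoc]
  rw [ENNReal.mul_inv_cancel (by simp) (by simp), one_mul]

end PMF

section SaltedHash

variable {α : Type} [Fintype α] [DecidableEq α]

noncomputable def saltedHashSigns (P : PMF α) (r : ℕ) [NeZero r] : PMF (ℝ × ℝ) := do
  let x ← P
  let x' ← P
  let s ← PMF.uniformOfFintype (Fin r)
  let s' ← PMF.uniformOfFintype (Fin r)
  let h : Fin r × α → Bool ← PMF.uniformOfFintype (Fin r × α → Bool)
  pure ((if h (s, x) then (1 : ℝ) else -1), (if h (s', x') then (1 : ℝ) else -1))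

lemma saltedHashSigns_toMeasure_setOf_fst_eq_snd (P : PMF α) (r : ℕ) [NeZero r] :
    (saltedHashSigns P r).toMeasure {z | z.1 = z.2}
      = 2⁻¹ + (∑ x, P x ^ 2) * ((r : ℝ≥0∞)⁻¹ * 2⁻¹) := by
  rw [saltedHashSigns, PMF.toMeasure_apply_eq_toOuterMeasure_apply _
    (measurableSet_eq_fun measurable_fst measurable_snd)]
  simp only [PMF.monad_bind_eq_bind, PMF.monad_pure_eq_pure, PMF.toOuterMeasure_bind_apply P,
    PMF.toOuterMeasure_bind_apply (PMF.uniformOfFintype (Fin r)),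
    PMF.toOuterMeasure_bind_pure_setOf_fst_eq_snd, injective_ite_one_neg_one.eq_iff,
    PMF.toOuterMeasure_uniformOfFintype_setOf_apply_eq_apply, tsum_fintype, Prod.mk.injEq,
    ite_and, PMF.sum_mul_sum_mul_add_ite, mul_ite, mul_zero, PMF.sum_uniformOfFintype_sq,
    Fintype.card_fin]

lemma toReal_saltedHashSigns_toMeasure_setOf_fst_eq_snd (P : PMF α) (r : ℕ) [NeZero r] :
    ((saltedHashSigns P r).toMeasure {z | z.1 = z.2}).toReal
      = 1 / 2 + (∑ x, (P x).toReal ^ 2) / (2 * r) := by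
  have hsum : ∑ x, P x ^ 2 ≠ ∞ := ENNReal.sum_ne_top.2 fun x _ => by simp [P.apply_ne_top]
  rw [saltedHashSigns_toMeasure_setOf_fst_eq_snd, ENNReal.toReal_add (by simp)
      (ENNReal.mul_ne_top hsum (ENNReal.mul_ne_top (by simp [NeZero.ne r]) (by simp))),
    ENNReal.toReal_mul, ENNReal.toReal_sum fun x _ => by simp [P.apply_ne_top]]
  simp only [ENNReal.toReal_mul, ENNReal.toReal_pow, ENNReal.toReal_inv, ENNReal.toReal_natCast,
    ENNReal.toReal_ofNat]
  ring

end SaltedHash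

/-- Let `p` be a pmf on a finite type `α` and `r ≥ 1`. Draw `X, X' ~ p`
independently, salts `s, s'` independently uniform on `{1,...,r}` (modeled as `Fin r`),
and an independent family of uniform `{-1,+1}`-valued hash values `h_{t,x}` (modeled as a
uniform random function `Fin r × α → Bool`, with `b ↦ if b then 1 else -1` giving the
`±1` hash values). Then `Pr[h_{s,X} = h_{s',X'}] = 1/2 + C(p)/(2r)`; equivalently,
`C(p) = 2r (Pr[h_{s,X} = h_{s',X'}] - 1/2)`, where `C(p) = Σ_x p_x²`. -/
theorem salted_hash_collision_probability {α : Type} [Fintype α] [DecidableEq α]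
    (P : PMF α) (r : ℕ) [NeZero r] :
    (do
        let x ← P
        let x' ← P
        let s ← PMF.uniformOfFintype (Fin r)
        let s' ← PMF.uniformOfFintype (Fin r)
        let h : Fin r × α → Bool ← PMF.uniformOfFintype (Fin r × α → Bool)
        pure ((if h (s, x) then (1 : ℝ) else -1), (if h (s', x') then (1 : ℝ) else -1))
        : PMF (ℝ × ℝ)).toMeasure {z : ℝ × ℝ | z.1 = z.2}
        = ENNReal.ofReal (1 / 2 + (∑ x, (P x).toReal ^ 2) / (2 * r)) ∧
      ∑ x, (P x).toReal ^ 2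
        = 2 * r * (((do
            let x ← P
            let x' ← P
            let s ← PMF.uniformOfFintype (Fin r)
            let s' ← PMF.uniformOfFintype (Fin r)
            let h : Fin r × α → Bool ← PMF.uniformOfFintype (Fin r × α → Bool)
            pure ((if h (s, x) then (1 : ℝ) else -1), (if h (s', x') then (1 : ℝ) else -1))
            : PMF (ℝ × ℝ)).toMeasure {z : ℝ × ℝ | z.1 = z.2}).toReal - 1 / 2) := by
  have hprob := toReal_saltedHashSigns_toMeasure_setOf_fst_eq_snd P r
  unfold saltedHashSigns at hprob
  constructor
  · rw [← hprob, ENNReal.ofReal_toReal (MeasureTheory.measure_ne_top _ _)]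
  · have hr : (r : ℝ) ≠ 0 := NeZero.ne _
    rw [hprob]
    field_simp
    ring
end
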